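/- arXiv:1701.04785 — 9 statements merged into one kernel-verified Lean document; each statement's English description precedes it below -/
import Mathlib

section
/- For 1 < p ≤ 2, with A = 1/cos^p(π/(2p)) and B = tan(π/(2p)), for all real x with |x| ≤ π/2 one has A·cos^p(x) − B·cos(p x) ≥ 1. -/
/-!
Let `c = π / (2p)`, so that `p c = π / 2`, and put `φ(t) = (1 + tan c · cos (p t)) / cos^p t`.
By evenness it suffices to show `φ ≤ φ(c) = 1 / cos^p c` on `[0, π / 2)`, together with
`tan c · sin ((p - 1) π / 2) ≥ 1` for `x = π / 2`. Now `φ'(t)` has the sign of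
`sin (p - 1)c · sin t - sin c · sin (p - 1)t`, where `sin (p - 1)c = cos c`. Since `0 < p - 1 ≤ 1`,
the ratio `sin (p - 1)t / sin t` is increasing on `(0, π)`, so `φ` increases up to `c` and
decreases after it; the same monotonicity, between `c` and `π / 2`, gives the endpoint case.
-/

open Real Set

section SinRatio

variable {α : ℝ}

theorem sin_mul_mul_cos_le_mul_cos_mul_mul_sin (hα0 : 0 ≤ α) (hα1 : α ≤ 1) {t : ℝ}
    (ht0 : 0 ≤ t) (htπ : t ≤ π) : sin (α * t) * cos t ≤ α * cos (α * t) * sin t := by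
  let n : ℝ → ℝ := fun s => α * cos (α * s) * sin s - sin (α * s) * cos s
  have hn : ∀ s, HasDerivAt n ((1 - α ^ 2) * sin (α * s) * sin s) s := by
    intro s
    have hαs : HasDerivAt (fun s => α * s) α s := by simpa using (hasDerivAt_id s).const_mul α
    refine (((hαs.cos.const_mul α).mul (hasDerivAt_sin s)).sub
      (hαs.sin.mul (hasDerivAt_cos s))).congr_deriv ?_
    ring
  have hmono : MonotoneOn n (Icc 0 π) := by
    refine monotoneOn_of_hasDerivWithinAt_nonneg (convex_Icc 0 π)
      (fun s _ => (hn s).continuousAt.continuousWithinAt)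
      (fun s _ => (hn s).hasDerivWithinAt) fun s hs => ?_
    rw [interior_Icc] at hs
    have hαs : α * s ≤ π := by nlinarith [hs.1, hs.2]
    have h1 : 0 ≤ 1 - α ^ 2 := by nlinarith
    exact mul_nonneg (mul_nonneg h1 (sin_nonneg_of_nonneg_of_le_pi (by nlinarith [hs.1]) hαs))
      (sin_nonneg_of_nonneg_of_le_pi hs.1.le hs.2.le)
  have := hmono ⟨le_rfl, pi_pos.le⟩ ⟨ht0, htπ⟩ ht0
  simp only [n, mul_zero, sin_zero, cos_zero] at this
  linarith

theorem monotoneOn_sin_mul_div_sin (hα0 : 0 ≤ α) (hα1 : α ≤ 1) :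
    MonotoneOn (fun t => sin (α * t) / sin t) (Ioo 0 π) := by
  have hderiv : ∀ t ∈ Ioo 0 π, HasDerivAt (fun t => sin (α * t) / sin t)
      ((cos (α * t) * α * sin t - sin (α * t) * cos t) / sin t ^ 2) t := fun t ht =>
    (((hasDerivAt_id t).const_mul α).sin.div (hasDerivAt_sin t)
      (sin_pos_of_mem_Ioo ht).ne').congr_deriv (by simp)
  refine monotoneOn_of_hasDerivWithinAt_nonneg (convex_Ioo 0 π)
    (fun t ht => (hderiv t ht).continuousAt.continuousWithinAt)
    (fun t ht => (hderiv t (interior_subset ht)).hasDerivWithinAt) fun t ht => ?_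
  rw [interior_Ioo] at ht
  have := sin_mul_mul_cos_le_mul_cos_mul_mul_sin hα0 hα1 ht.1.le ht.2.le
  exact div_nonneg (by linarith) (sq_nonneg _)

theorem sin_mul_mul_sin_le (hα0 : 0 ≤ α) (hα1 : α ≤ 1) {a b : ℝ} (ha : 0 < a) (hab : a ≤ b)
    (hb : b < π) : sin (α * a) * sin b ≤ sin (α * b) * sin a := by
  have hmono := monotoneOn_sin_mul_div_sin hα0 hα1 ⟨ha, hab.trans_lt hb⟩ ⟨ha.trans_le hab, hb⟩ hab
  rwa [div_le_div_iff₀ (sin_pos_of_pos_of_lt_pi ha (hab.trans_lt hb))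
    (sin_pos_of_pos_of_lt_pi (ha.trans_le hab) hb)] at hmono

end SinRatio

theorem isMaxOn_of_hasDerivAt_nonneg_of_nonpos {f f' : ℝ → ℝ} {a b c : ℝ} (hc : c ∈ Ico a b)
    (hf : ∀ t ∈ Ico a b, HasDerivAt f (f' t) t) (hinc : ∀ t ∈ Ioo a c, 0 ≤ f' t)
    (hdec : ∀ t ∈ Ioo c b, f' t ≤ 0) : IsMaxOn f (Ico a b) c := by
  intro y hy
  rcases le_total y c with hyc | hcy
  · have hsub : Icc a c ⊆ Ico a b := Icc_subset_Ico_right hc.2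
    refine monotoneOn_of_hasDerivWithinAt_nonneg (convex_Icc a c)
      (fun t ht => (hf t (hsub ht)).continuousAt.continuousWithinAt)
      (fun t ht => (hf t (hsub (interior_subset ht))).hasDerivWithinAt)
      (fun t ht => hinc t (by rwa [interior_Icc] at ht)) ⟨hy.1, hyc⟩ ⟨hc.1, le_rfl⟩ hyc
  · have hsub : Ico c b ⊆ Ico a b := Ico_subset_Ico_left hc.1
    refine antitoneOn_of_hasDerivWithinAt_nonpos (convex_Ico c b)
      (fun t ht => (hf t (hsub ht)).continuousAt.continuousWithinAt)
      (fun t ht => (hf t (hsub (interior_subset ht))).hasDerivWithinAt)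
      (fun t ht => hdec t (by rwa [interior_Ico] at ht)) ⟨le_rfl, hc.2⟩ ⟨hcy, hy.2⟩ hcy

theorem hasDerivAt_one_add_mul_cos_mul_div_cos_rpow (p B : ℝ) {t : ℝ} (ht : 0 < cos t) :
    HasDerivAt (fun s => (1 + B * cos (p * s)) / cos s ^ p)
      (p * (sin t - B * sin ((p - 1) * t)) / cos t ^ (p + 1)) t := by
  have hpt : HasDerivAt (fun s => p * s) p t := by simpa using (hasDerivAt_id t).const_mul p
  have h := ((hpt.cos.const_mul B).const_add 1).div
    ((hasDerivAt_cos t).rpow_const (p := p) (Or.inl ht.ne')) (rpow_pos_of_pos ht p).ne'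
  have hp : cos t ^ p = cos t ^ (p - 1) * cos t := by
    rw [← rpow_add_one ht.ne', sub_add_cancel]
  have hp1 : cos t ^ (p + 1) = cos t ^ (p - 1) * cos t ^ 2 := by
    rw [← rpow_natCast, ← rpow_add ht]; ring_nf
  have hsin : sin ((p - 1) * t) = sin (p * t) * cos t - cos (p * t) * sin t := by
    rw [sub_mul, one_mul, sin_sub]
  refine h.congr_deriv ?_
  rw [hp, hp1, hsin]
  field_simp
  ring

section Exponent

variable {p c : ℝ}

theorem pos_and_lt_pi_div_two_of_mul_eq (hp1 : 1 < p) (hpc : p * c = π / 2) :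
    0 < c ∧ c < π / 2 := by
  have hc : 0 < c := pos_of_mul_pos_right (hpc ▸ pi_div_two_pos) (by linarith)
  exact ⟨hc, by nlinarith⟩

theorem sin_sub_one_mul_eq_cos (hpc : p * c = π / 2) :
    sin ((p - 1) * c) = cos c := by
  rw [sub_mul, one_mul, hpc, sin_pi_div_two_sub]

theorem sin_sub_tan_mul_sin_eq (hpc : p * c = π / 2) (hc : cos c ≠ 0) (t : ℝ) :
    sin t - tan c * sin ((p - 1) * t) =
      (sin ((p - 1) * c) * sin t - sin ((p - 1) * t) * sin c) / cos c := by
  rw [sin_sub_one_mul_eq_cos hpc, tan_eq_sin_div_cos]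
  field_simp

theorem one_add_tan_mul_cos_mul_div_cos_rpow_le (hp1 : 1 < p) (hp2 : p ≤ 2)
    (hpc : p * c = π / 2) {y : ℝ} (hy : y ∈ Ico 0 (π / 2)) :
    (1 + tan c * cos (p * y)) / cos y ^ p ≤ 1 / cos c ^ p := by
  obtain ⟨hc0, hc⟩ := pos_and_lt_pi_div_two_of_mul_eq hp1 hpc
  have hcos : ∀ t ∈ Ico 0 (π / 2), 0 < cos t := fun t ht =>
    cos_pos_of_mem_Ioo ⟨by linarith [ht.1, pi_pos], ht.2⟩
  have hcc : 0 < cos c := hcos c ⟨hc0.le, hc⟩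
  have hfactor : ∀ t ∈ Ico 0 (π / 2), 0 ≤ p / (cos c * cos t ^ (p + 1)) := fun t ht =>
    div_nonneg (by linarith) (mul_pos hcc (rpow_pos_of_pos (hcos t ht) _)).le
  have hderiv : ∀ t, p * (sin t - tan c * sin ((p - 1) * t)) / cos t ^ (p + 1) =
      (sin ((p - 1) * c) * sin t - sin ((p - 1) * t) * sin c) *
        (p / (cos c * cos t ^ (p + 1))) := by
    intro t
    rw [sin_sub_tan_mul_sin_eq hpc hcc.ne']
    ring
  have hα0 : 0 ≤ p - 1 := by linarith
  have hα1 : p - 1 ≤ 1 := by linarith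
  have hmax := isMaxOn_of_hasDerivAt_nonneg_of_nonpos ⟨hc0.le, hc⟩
    (fun t ht => hasDerivAt_one_add_mul_cos_mul_div_cos_rpow p (tan c) (hcos t ht))
    (fun t ht => ?_) (fun t ht => ?_) hy
  · simpa [hpc] using hmax
  · rw [hderiv]
    have := sin_mul_mul_sin_le hα0 hα1 ht.1 ht.2.le (by linarith)
    exact mul_nonneg (by linarith) (hfactor t ⟨ht.1.le, ht.2.trans hc⟩)
  · rw [hderiv]
    have := sin_mul_mul_sin_le hα0 hα1 hc0 ht.1.le (by linarith [ht.2])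
    exact mul_nonpos_of_nonpos_of_nonneg (by linarith) (hfactor t ⟨hc0.le.trans ht.1.le, ht.2⟩)

theorem one_le_neg_tan_mul_cos_mul_pi_div_two (hp1 : 1 < p) (hp2 : p ≤ 2)
    (hpc : p * c = π / 2) : 1 ≤ -(tan c * cos (p * (π / 2))) := by
  obtain ⟨hc0, hc⟩ := pos_and_lt_pi_div_two_of_mul_eq hp1 hpc
  have hcross := sin_mul_mul_sin_le (α := p - 1) (by linarith) (by linarith) hc0 hc.le
    (by linarith [pi_pos])
  rw [sin_sub_one_mul_eq_cos hpc, sin_pi_div_two, mul_one] at hcross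
  have hcos : p * (π / 2) = (p - 1) * (π / 2) + π / 2 := by ring
  rw [hcos, cos_add_pi_div_two, tan_eq_sin_div_cos, mul_neg, neg_neg, div_mul_eq_mul_div,
    le_div_iff₀ (cos_pos_of_mem_Ioo ⟨by linarith, hc⟩)]
  linarith

end Exponent

theorem stmt_0 (p : ℝ) (hp1 : 1 < p) (hp2 : p ≤ 2) (x : ℝ) (hx : |x| ≤ π / 2) :
    (1 / Real.cos (π / (2 * p)) ^ p) * Real.cos x ^ p
      - Real.tan (π / (2 * p)) * Real.cos (p * x) ≥ 1 := by
  have hpc : p * (π / (2 * p)) = π / 2 := by field_simp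
  wlog hx0 : 0 ≤ x generalizing x
  · simpa only [cos_neg, mul_neg] using this (-x) (by rwa [abs_neg]) (by linarith)
  rw [abs_of_nonneg hx0] at hx
  rcases hx.eq_or_lt with rfl | hlt
  · rw [cos_pi_div_two, zero_rpow (by linarith), mul_zero]
    linarith [one_le_neg_tan_mul_cos_mul_pi_div_two hp1 hp2 hpc]
  · have hmax := one_add_tan_mul_cos_mul_div_cos_rpow_le hp1 hp2 hpc ⟨hx0, hlt⟩
    rw [div_le_iff₀ (rpow_pos_of_pos (cos_pos_of_mem_Ioo ⟨by linarith, hlt⟩) p)] at hmax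
    linarith
end

section
/- For every real x with 0 < x ≤ π/4, one has 1 + 1/x² − (csc x)² ≥ 0, i.e. sin²x · (1 + 1/x²) ≥ 1. -/
open Real

lemma one_le_one_sub_sq_div_six_sq_mul_one_add_sq {x : ℝ} (hx : x ^ 2 ≤ 3) :
    1 ≤ (1 - x ^ 2 / 6) ^ 2 * (1 + x ^ 2) := by
  -- the difference is x² (3 - x²) (8 - x²) / 36
  have h8 : (0 : ℝ) ≤ 8 - x ^ 2 := by linarith
  nlinarith [mul_nonneg (mul_nonneg (sq_nonneg x) (sub_nonneg.2 hx)) h8]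

lemma one_le_sin_sq_mul_one_add_inv_sq {x : ℝ} (hx0 : 0 < x) (hx : x ^ 2 ≤ 3) :
    1 ≤ sin x ^ 2 * (1 + 1 / x ^ 2) := by
  have hcube : 0 ≤ x - x ^ 3 / 6 := by nlinarith
  calc 1 ≤ (1 - x ^ 2 / 6) ^ 2 * (1 + x ^ 2) := one_le_one_sub_sq_div_six_sq_mul_one_add_sq hx
    _ = (x - x ^ 3 / 6) ^ 2 * (1 + 1 / x ^ 2) := by field_simp; ring
    _ ≤ sin x ^ 2 * (1 + 1 / x ^ 2) := by gcongr; exact (sin_gt_sub_cube hx0).le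

theorem stmt_1 (x : ℝ) (hx0 : 0 < x) (hx : x ≤ π / 4) :
    Real.sin x ^ 2 * (1 + 1 / x ^ 2) ≥ 1 :=
  one_le_sin_sq_mul_one_add_inv_sq hx0 (by nlinarith [pi_lt_four])
end

section
/- For every real p ≥ 4, cos(π·(1 − 1/p)/p) ≤ 1 − (1 − cos(π/p))^(p/(p−2)). -/
open Real

/-!
Put `x = π / p` and `l = 1 - 1 / p`, so the claim reads `(1 - cos x) ^ (p / (p - 2)) ≤ 1 - cos (l x)`.
Concavity of `sin` on `[0, π]` gives `sin (l t) ≥ l sin t`, hence `1 - cos (l x) ≥ l² (1 - cos x)`,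
and it remains to show `(1 - cos x) ^ (2 / (p - 2)) ≤ l²`, i.e. `1 - cos x ≤ l ^ (p - 2)`.
Since `x ≤ π / 4`, the left side is at most `x² / 2 < e⁻¹`, while `l ^ (p - 1) ≥ e⁻¹`
because `log l ≥ 1 - 1 / l = -1 / (p - 1)`.
-/

namespace Real

lemma one_sub_cos_eq_two_mul_sin_sq (x : ℝ) : 1 - cos x = 2 * sin (x / 2) ^ 2 := by
  rw [sin_sq_eq_half_sub, mul_div_cancel₀ x two_ne_zero]
  ring

lemma mul_sin_le_sin_mul {l t : ℝ} (hl₀ : 0 ≤ l) (hl₁ : l ≤ 1) (ht₀ : 0 ≤ t) (ht : t ≤ π) :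
    l * sin t ≤ sin (l * t) := by
  have h := strictConcaveOn_sin_Icc.concaveOn.2 ⟨ht₀, ht⟩ ⟨le_rfl, pi_pos.le⟩ hl₀
    (sub_nonneg.2 hl₁) (add_sub_cancel l 1)
  simpa only [smul_eq_mul, mul_zero, add_zero, sin_zero] using h

lemma sq_mul_one_sub_cos_le_one_sub_cos_mul {l x : ℝ} (hl₀ : 0 ≤ l) (hl₁ : l ≤ 1)
    (hx₀ : 0 ≤ x) (hx : x ≤ 2 * π) : l ^ 2 * (1 - cos x) ≤ 1 - cos (l * x) := by
  have hsin : l * sin (x / 2) ≤ sin (l * (x / 2)) :=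
    mul_sin_le_sin_mul hl₀ hl₁ (by linarith) (by linarith)
  have hsin₀ : 0 ≤ l * sin (x / 2) :=
    mul_nonneg hl₀ (sin_nonneg_of_nonneg_of_le_pi (by linarith) (by linarith))
  rw [one_sub_cos_eq_two_mul_sin_sq, one_sub_cos_eq_two_mul_sin_sq, mul_div_assoc]
  nlinarith [pow_le_pow_left₀ hsin₀ hsin 2]

lemma one_sub_cos_le_exp_neg_one {x : ℝ} (hx : |x| ≤ π / 4) : 1 - cos x ≤ exp (-1) := by
  have hx2 : x ^ 2 ≤ (π / 4) ^ 2 := by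
    rw [← sq_abs]
    exact pow_le_pow_left₀ (abs_nonneg x) hx 2
  nlinarith [one_sub_sq_div_two_le_cos (x := x), exp_neg_one_gt_d9, pi_lt_d2, pi_pos]

lemma exp_neg_one_le_one_sub_inv_rpow {p : ℝ} (hp : 1 < p) :
    exp (-1) ≤ (1 - p⁻¹) ^ (p - 1) := by
  have hl : 0 < 1 - p⁻¹ := sub_pos.2 (inv_lt_one_of_one_lt₀ hp)
  have hp₁ : 0 < p - 1 := sub_pos.2 hp
  rw [rpow_def_of_pos hl, exp_le_exp]
  have hlog := one_sub_inv_le_log_of_pos hl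
  have h : 1 - (1 - p⁻¹)⁻¹ = -1 / (p - 1) := by
    field_simp
    ring
  rw [h, div_le_iff₀ hp₁] at hlog
  linarith

end Real

theorem stmt_3 (p : ℝ) (hp : 4 ≤ p) :
    Real.cos (π * (1 - 1 / p) / p) ≤ 1 - (1 - Real.cos (π / p)) ^ (p / (p - 2)) := by
  have hp₂ : 0 < p - 2 := by linarith
  set x := π / p with hx
  set l := 1 - p⁻¹ with hl
  have hx₀ : 0 < x := by positivity
  have hx₄ : x ≤ π / 4 := div_le_div_of_nonneg_left pi_pos.le (by norm_num) hp
  have hl₀ : 0 < l := sub_pos.2 (inv_lt_one_of_one_lt₀ (by linarith))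
  have hl₁ : l ≤ 1 := sub_le_self 1 (by positivity)
  have ha : 0 < 1 - cos x := sub_pos.2 (by simpa using cos_lt_cos_of_nonneg_of_le_pi le_rfl (by linarith) hx₀)
  have hle : 1 - cos x ≤ l ^ (p - 2) := calc
    1 - cos x ≤ exp (-1) := one_sub_cos_le_exp_neg_one (by rwa [abs_of_pos hx₀])
    _ ≤ l ^ (p - 1) := exp_neg_one_le_one_sub_inv_rpow (by linarith)
    _ ≤ l ^ (p - 2) := rpow_le_rpow_of_exponent_ge hl₀ hl₁ (by linarith)
  have hpow : (1 - cos x) ^ (2 / (p - 2)) ≤ l ^ 2 := calc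
    (1 - cos x) ^ (2 / (p - 2)) ≤ (l ^ (p - 2)) ^ (2 / (p - 2)) :=
      rpow_le_rpow ha.le hle (by positivity)
    _ = l ^ 2 := by
      rw [← rpow_mul hl₀.le, mul_div_cancel₀ _ hp₂.ne', rpow_two]
  calc cos (π * (1 - 1 / p) / p) = cos (l * x) := by rw [hl, hx]; ring_nf
    _ ≤ 1 - l ^ 2 * (1 - cos x) := by
      linarith [sq_mul_one_sub_cos_le_one_sub_cos_mul hl₀.le hl₁ hx₀.le (by linarith)]
    _ ≤ 1 - (1 - cos x) * (1 - cos x) ^ (2 / (p - 2)) := by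
      nlinarith [mul_le_mul_of_nonneg_left hpow ha.le]
    _ = 1 - (1 - cos x) ^ (p / (p - 2)) := by
      rw [← rpow_one_add' ha.le (by positivity)]
      congr 2
      field_simp
      ring
end

section
/- For every real p with 1 ≤ p < 2, one has 2^(1 − 1/p) · sin(π/(2p)) ≥ 1. -/
open Real

theorem stmt_4 (p : ℝ) (hp1 : 1 ≤ p) (hp2 : p < 2) :
    (2 : ℝ) ^ (1 - 1 / p) * Real.sin (π / (2 * p)) ≥ 1 := by
  have hp0 : 0 < p := by linarith
  set t : ℝ := 1 / p with ht
  have ht2 : t ≤ 1 := by rw [ht, div_le_one hp0]; linarith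
  have ht1 : 1 / 2 < t := by rw [ht, lt_div_iff₀ hp0]; linarith
  set s : ℝ := 2 * t - 1 with hs
  have hs0 : 0 ≤ s := by simp only [hs]; linarith
  have hs1 : s ≤ 1 := by simp only [hs]; linarith
  have hx : π / (2 * p) = (1 - s) • (π / 4) + s • (π / 2) := by
    simp only [smul_eq_mul, hs, ht]
    field_simp
    ring
  have hconc : (1 - s) • Real.sin (π / 4) + s • Real.sin (π / 2) ≤
      Real.sin ((1 - s) • (π / 4) + s • (π / 2)) :=
    (strictConcaveOn_sin_Icc.concaveOn).2 ⟨by positivity, by linarith [pi_pos]⟩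
      ⟨by positivity, by linarith [pi_pos]⟩ (by linarith) hs0 (by ring)
  have hexp := convexOn_exp.2 (Set.mem_univ (Real.log 2 * (-(1 / 2)))) (Set.mem_univ 0)
    (by linarith : (0:ℝ) ≤ 1 - s) hs0 (by ring)
  have h2 : (0:ℝ) < 2 := by norm_num
  have hrp : ∀ x : ℝ, (2:ℝ) ^ x = Real.exp (Real.log 2 * x) := fun x =>
    Real.rpow_def_of_pos h2 x
  have hval : Real.exp (Real.log 2 * (-(1 / 2))) = Real.sin (π / 4) := by
    rw [← hrp, Real.sin_pi_div_four]
    rw [Real.rpow_neg (by norm_num : (0:ℝ) ≤ 2)]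
    rw [← Real.sqrt_eq_rpow]
    rw [inv_eq_one_div, div_eq_div_iff (by positivity) (by norm_num)]
    nlinarith [Real.sq_sqrt (by norm_num : (0:ℝ) ≤ 2), Real.sqrt_nonneg 2]
  have key : (2:ℝ) ^ (t - 1) ≤ Real.sin (π / (2 * p)) := by
    rw [hrp, hx]
    calc Real.exp (Real.log 2 * (t - 1))
        = Real.exp ((1 - s) • (Real.log 2 * (-(1 / 2))) + s • 0) := by
          simp only [smul_eq_mul, hs]; ring_nf
      _ ≤ (1 - s) • Real.exp (Real.log 2 * (-(1 / 2))) + s • Real.exp 0 := hexp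
      _ = (1 - s) • Real.sin (π / 4) + s • Real.sin (π / 2) := by
          rw [hval, Real.exp_zero, Real.sin_pi_div_two]
      _ ≤ Real.sin ((1 - s) • (π / 4) + s • (π / 2)) := hconc
  have hpos : (0:ℝ) < (2:ℝ) ^ (1 - t) := Real.rpow_pos_of_pos h2 _
  calc (2 : ℝ) ^ (1 - 1 / p) * Real.sin (π / (2 * p))
      ≥ (2:ℝ) ^ (1 - t) * (2:ℝ) ^ (t - 1) :=
        mul_le_mul_of_nonneg_left key (le_of_lt hpos)
    _ = 1 := by rw [← Real.rpow_add h2]; norm_num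
end

section
/- For every real p with 1 ≤ p ≤ 2, the quantity X = 2^(p/2) · cos(π/(2p)) · sin(π/(2p))^(p−1) satisfies X ≤ 1. -/
open Real

theorem stmt_5 (p : ℝ) (hp1 : 1 ≤ p) (hp2 : p ≤ 2) :
    (2 : ℝ) ^ (p / 2) * Real.cos (π / (2 * p)) * Real.sin (π / (2 * p)) ^ (p - 1) ≤ 1 := by
  have hp0 : (0 : ℝ) < p := by linarith
  have hπ := Real.pi_pos
  set θ := π / (2 * p) with hθ
  have hθpos : 0 < θ := by positivity
  have hθle : θ ≤ π / 2 := by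
    rw [hθ, div_le_div_iff₀ (by positivity) (by norm_num)]
    nlinarith
  have hθge : π / 4 ≤ θ := by
    rw [hθ, div_le_div_iff₀ (by norm_num) (by positivity)]
    nlinarith
  have hs : 0 < Real.sin θ :=
    Real.sin_pos_of_pos_of_lt_pi hθpos (lt_of_le_of_lt hθle (by linarith))
  have hc0 : 0 ≤ Real.cos θ := Real.cos_nonneg_of_mem_Icc ⟨by linarith, hθle⟩
  have hcs : Real.cos θ ≤ Real.sin θ := by
    rw [← Real.sin_pi_div_two_sub]
    exact Real.sin_le_sin_of_le_of_le_pi_div_two (by linarith) hθle (by linarith)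
  rcases eq_or_lt_of_le hc0 with h | hc
  · rw [← h]
    simp
  · have h2sc : 2 * Real.sin θ * Real.cos θ ≤ 1 := by
      rw [← Real.sin_two_mul]
      exact Real.sin_le_one _
    have key : (2 : ℝ) ^ (p / 2) * Real.cos θ * Real.sin θ ^ (p - 1)
        = (2 * Real.sin θ * Real.cos θ) ^ (p / 2) * (Real.cos θ / Real.sin θ) ^ (1 - p / 2) := by
      rw [Real.mul_rpow (by positivity) hc.le, Real.mul_rpow (by norm_num) hs.le,
        Real.div_rpow hc.le hs.le]
      rw [show Real.cos θ ^ (1 - p / 2) / Real.sin θ ^ (1 - p / 2)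
          = Real.cos θ ^ (1 - p / 2) * Real.sin θ ^ (-(1 - p / 2)) by
        rw [Real.rpow_neg hs.le]; ring]
      rw [show (2:ℝ) ^ (p / 2) * Real.sin θ ^ (p / 2) * Real.cos θ ^ (p / 2) *
          (Real.cos θ ^ (1 - p / 2) * Real.sin θ ^ (-(1 - p / 2)))
          = 2 ^ (p / 2) * (Real.cos θ ^ (p / 2) * Real.cos θ ^ (1 - p / 2)) *
            (Real.sin θ ^ (p / 2) * Real.sin θ ^ (-(1 - p / 2))) by ring]
      rw [← Real.rpow_add hc, ← Real.rpow_add hs,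
        show (p / 2 + (1 - p / 2) : ℝ) = 1 by ring,
        show (p / 2 + -(1 - p / 2) : ℝ) = p - 1 by ring, Real.rpow_one]
    rw [key]
    calc (2 * Real.sin θ * Real.cos θ) ^ (p / 2) * (Real.cos θ / Real.sin θ) ^ (1 - p / 2)
        ≤ 1 * 1 := by
          apply mul_le_mul
          · exact Real.rpow_le_one (by positivity) h2sc (by linarith)
          · exact Real.rpow_le_one (by positivity) ((div_le_one hs).mpr hcs) (by linarith)
          · positivity
          · norm_num
      _ = 1 := by norm_num
end

section
/- For all real p with 1 < p ≤ 2, one has 2^(p/2 − 1) ≥ (1 + cos(π/p))^(p/2). -/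
open Real

theorem stmt_6 (p : ℝ) (hp1 : 1 < p) (hp2 : p ≤ 2) :
    (2 : ℝ) ^ (p / 2 - 1) ≥ (1 + Real.cos (π / p)) ^ (p / 2) := by
  have hp0 : 0 < p := by linarith
  have hpi : (0:ℝ) < π := Real.pi_pos
  have hc0 : 0 ≤ 1 + Real.cos (π / p) := by nlinarith [Real.neg_one_le_cos (π / p)]
  have hpi1 : π > 3.141592 := Real.pi_gt_d6
  have hpi2 : π < 3.141593 := Real.pi_lt_d6
  -- key inequality
  have key : 1 + Real.cos (π / p) ≤ (2:ℝ) ^ (p - 2) := by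
    rcases le_or_gt p (3/2) with hp32 | hp32
    · -- p ≤ 3/2 : cos (π/p) ≤ cos (2π/3) = -1/2
      have h1 : Real.cos (π / p) ≤ Real.cos (2 * π / 3) := by
        apply Real.cos_le_cos_of_nonneg_of_le_pi (by positivity)
        · rw [div_le_iff₀ hp0]; nlinarith
        · rw [div_le_div_iff₀ (by norm_num) hp0]; nlinarith
      have h2 : Real.cos (2 * π / 3) = -(1/2) := by
        have h : (2:ℝ) * π / 3 = π - π / 3 := by ring
        rw [h, Real.cos_pi_sub, Real.cos_pi_div_three]
      have h3 : ((2:ℝ)) ^ (-1 : ℝ) ≤ (2:ℝ) ^ (p - 2) :=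
        Real.rpow_le_rpow_of_exponent_le one_le_two (by linarith)
      rw [Real.rpow_neg_one] at h3
      norm_num at h3
      linarith
    · -- 3/2 < p ≤ 2
      obtain ⟨s, hs_def⟩ : ∃ s : ℝ, s = π / p - π / 2 := ⟨_, rfl⟩
      have hππ : π / 2 ≤ π / p := by
        apply div_le_div_of_nonneg_left hpi.le hp0; linarith
      have hs0 : 0 ≤ s := by rw [hs_def]; linarith
      have hs_eq : s * (2 * p) = π * (2 - p) := by
        rw [hs_def]; field_simp
      have hππ2 : π / p ≤ 2 * π / 3 := by
        rw [div_le_div_iff₀ hp0 (by norm_num)]; nlinarith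
      have hs_small : s ≤ π / 6 := by rw [hs_def]; linarith
      have hs_half : s ≤ 0.5236 := by linarith
      have hs1 : s ≤ 1 := hs_half.trans (by norm_num)
      have hcos : Real.cos (π / p) = - Real.sin s := by
        have h : π / p = s + π / 2 := by rw [hs_def]; ring
        rw [h, Real.cos_add_pi_div_two]
      have hsin : s - s ^ 3 / 4 ≤ Real.sin s := by
        rcases eq_or_lt_of_le hs0 with h | h
        · simp [← h]
        · exact le_trans (by nlinarith [pow_pos h 3]) (Real.sin_gt_sub_cube h).le
      have hexp : 1 + Real.log 2 * (p - 2) ≤ (2:ℝ) ^ (p - 2) := by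
        rw [Real.rpow_def_of_pos (by norm_num)]
        linarith [Real.add_one_le_exp (Real.log 2 * (p - 2))]
      have hlog : Real.log 2 < 0.6931471808 := Real.log_two_lt_d9
      have hlog0 : 0 < Real.log 2 := Real.log_pos (by norm_num)
      have hε : (0:ℝ) ≤ 2 - p := by linarith
      have h4 : 0.785398 * (2 - p) ≤ s := by
        nlinarith [hs_eq, mul_nonneg hs0 (by linarith : (0:ℝ) ≤ 4 - 2*p),
          mul_nonneg (by linarith : (0:ℝ) ≤ π - 3.141592) hε]
      have h5 : s ^ 3 ≤ 0.2742 * s := by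
        nlinarith [mul_nonneg hs0 (mul_nonneg (sub_nonneg.2 hs_half)
          (by linarith : (0:ℝ) ≤ 0.5236 + s)), hs0]
      have hmain : (2 - p) * Real.log 2 ≤ s - s ^ 3 / 4 := by
        nlinarith [mul_nonneg hε (by linarith : (0:ℝ) ≤ 0.6932 - Real.log 2)]
      rw [hcos]
      linarith
  -- conclude via rpow monotonicity
  have h2 : (0:ℝ) ≤ p / 2 := by linarith
  calc (1 + Real.cos (π / p)) ^ (p / 2)
      ≤ ((2:ℝ) ^ (p - 2)) ^ (p / 2) := Real.rpow_le_rpow hc0 key h2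
    _ = (2:ℝ) ^ ((p - 2) * (p / 2)) := (Real.rpow_mul (by norm_num) _ _).symm
    _ ≤ (2:ℝ) ^ (p / 2 - 1) := by
        apply Real.rpow_le_rpow_of_exponent_le one_le_two
        nlinarith
end

section
/- The function ψ(p) = 2^(p/2 − 1) / (1 + cos(π/p))^(p/2) is decreasing on (1, 2], so that ψ(p) ≥ ψ(2) = 1 for all 1 < p ≤ 2. -/
/-!
Since `1 + cos (π / p) = 2 cos² (π / 2p)`, we have `ψ(p) = exp (-(π / 2) · h (π / 2p)) / 2` with
`h x = log (cos x) / x`. This `h` is the slope of the secant of the concave function `log ∘ cos`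
through `0`, where `log (cos 0) = 0`, so it is antitone on `(0, π / 2)`; as `p ↦ π / 2p` is
antitone, `ψ` is antitone on `(1, ∞)`.
-/

open Real Set

lemma concaveOn_log_cos : ConcaveOn ℝ (Ioo (-(π / 2)) (π / 2)) (fun x => log (cos x)) := by
  have hcos : ConcaveOn ℝ (Ioo (-(π / 2)) (π / 2)) cos :=
    strictConcaveOn_cos_Icc.concaveOn.subset Ioo_subset_Icc_self (convex_Ioo _ _)
  have himage : cos '' Ioo (-(π / 2)) (π / 2) ⊆ Ioi 0 := by
    rintro _ ⟨x, hx, rfl⟩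
    exact cos_pos_of_mem_Ioo hx
  have hconvex : Convex ℝ (cos '' Ioo (-(π / 2)) (π / 2)) :=
    convex_iff_isPreconnected.2 (isPreconnected_Ioo.image _ continuousOn_cos)
  exact (strictConcaveOn_log_Ioi.concaveOn.subset himage hconvex).comp hcos
    (strictMonoOn_log.monotoneOn.mono himage)

lemma antitoneOn_log_cos_div :
    AntitoneOn (fun x => log (cos x) / x) (Ioo (-(π / 2)) (π / 2) \ {0}) := by
  have hzero : (0 : ℝ) ∈ Ioo (-(π / 2)) (π / 2) := ⟨neg_lt_zero.2 pi_div_two_pos, pi_div_two_pos⟩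
  intro x hx y hy hxy
  simpa [slope_def_field] using concaveOn_log_cos.slope_anti hzero hx hy hxy

lemma pi_div_two_mul_mem_Ioo {p : ℝ} (hp : 1 < p) : π / (2 * p) ∈ Ioo 0 (π / 2) := by
  refine ⟨by positivity, ?_⟩
  rw [div_lt_div_iff₀ (by positivity) two_pos]
  nlinarith [pi_pos]

noncomputable def psi (p : ℝ) : ℝ := 2 ^ (p / 2 - 1) / (1 + cos (π / p)) ^ (p / 2)

lemma psi_two : psi 2 = 1 := by
  norm_num [psi]

lemma psi_eq_exp {p : ℝ} (hp : 1 < p) :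
    psi p = exp (-(π / 2) * (log (cos (π / (2 * p))) / (π / (2 * p)))) / 2 := by
  have hp0 : 0 < p := by linarith
  obtain ⟨hx0, hx⟩ := pi_div_two_mul_mem_Ioo hp
  have hc : 0 < cos (π / (2 * p)) := cos_pos_of_mem_Ioo ⟨by linarith [pi_pos], hx⟩
  have hdouble : 1 + cos (π / p) = 2 * cos (π / (2 * p)) ^ 2 := by
    rw [cos_sq, show 2 * (π / (2 * p)) = π / p by field_simp]
    ring
  rw [psi, hdouble, rpow_def_of_pos two_pos, rpow_def_of_pos (by positivity),
    log_mul two_ne_zero (by positivity), log_pow, ← exp_sub,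
    eq_div_iff two_ne_zero, ← exp_log two_pos, ← exp_add, exp_log two_pos]
  congr 1
  field_simp
  push_cast
  ring

lemma psi_antitoneOn : AntitoneOn psi (Ioi 1) := by
  intro p hp q hq hpq
  have hp0 : 0 < p := zero_lt_one.trans hp
  have hb := pi_div_two_mul_mem_Ioo hq
  have ha := pi_div_two_mul_mem_Ioo hp
  have hslope :
      log (cos (π / (2 * p))) / (π / (2 * p)) ≤ log (cos (π / (2 * q))) / (π / (2 * q)) :=
    antitoneOn_log_cos_div ⟨⟨by linarith [pi_pos, hb.1], hb.2⟩, hb.1.ne'⟩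
      ⟨⟨by linarith [pi_pos, ha.1], ha.2⟩, ha.1.ne'⟩
      (div_le_div_of_nonneg_left pi_pos.le (by positivity) (by linarith))
  rw [psi_eq_exp hp, psi_eq_exp hq]
  gcongr exp ?_ / 2
  exact mul_le_mul_of_nonpos_left hslope (by linarith [pi_pos])

theorem stmt_7 :
    (∀ p q : ℝ, 1 < p → p ≤ q → q ≤ 2 →
      (2 : ℝ) ^ (q / 2 - 1) / (1 + Real.cos (π / q)) ^ (q / 2)
        ≤ (2 : ℝ) ^ (p / 2 - 1) / (1 + Real.cos (π / p)) ^ (p / 2)) ∧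
    ((2 : ℝ) ^ ((2 : ℝ) / 2 - 1) / (1 + Real.cos (π / 2)) ^ ((2 : ℝ) / 2) = 1) ∧
    (∀ p : ℝ, 1 < p → p ≤ 2 →
      1 ≤ (2 : ℝ) ^ (p / 2 - 1) / (1 + Real.cos (π / p)) ^ (p / 2)) :=
  ⟨fun _ _ hp hpq _ => psi_antitoneOn hp (hp.trans_le hpq) hpq, psi_two,
    fun _ hp hp2 => psi_two.symm.le.trans (psi_antitoneOn hp (mem_Ioi.2 one_lt_two) hp2)⟩
end

section
/- For 1 < p ≤ 2 and all complex numbers z, w, one has (|w|² + |z|²)^(p/2) ≤ (1 + cos(π/p))^(−p/2) · |w + conj(z)|^p − 2^(p/2) · tan(π/(2p)) · F_p(z,w), where F_p(z,w) = Re((wz)^(p/2)) defined via the branch: for ζ = ρ e^{iθ} with θ ∈ [−π, π], Re(ζ^(p/2)) = ρ^(p/2) cos(pθ/2). -/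
/-!
Write `wz = r e^{iφ}` with `|φ| ≤ π`, `s = |w|² + |z|² ≥ 2r` and `α = π/(2p)`, so that
`|w + z̄|² = s + 2r cos φ`, `Re((wz)^{p/2}) = r^{p/2} cos(pφ/2)` and
`(1 + cos(π/p))^{-p/2} = 2^{-p/2} cos^{-p} α`. Because `cos^p α ≤ 1/2`, the difference of the two
sides is increasing in `s`, so the worst case is `s = 2r`, i.e. `|w| = |z|`. There, with
`ψ = |φ|/2 ∈ [0, π/2]`, the inequality reduces to `cos^p α + cos^{p-1} α sin α cos(pψ) ≤ cos^p ψ`,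
an equality at `ψ = α`. The derivative in `ψ` of the difference is `p sin(pψ) (H α - H ψ)` with
`H t = cos^{p-1} t sin t / sin(pt)`, and `H` decreases on `(0, π/2)` because `sin u / u`
decreases on `[0, π]`; hence `ψ = α` is the minimum.
-/

open Real Set

lemma mul_sin_le_mul_sin {x y : ℝ} (hx : 0 ≤ x) (hxy : x ≤ y) (hy : y ≤ π) :
    x * sin y ≤ y * sin x := by
  rcases hx.eq_or_lt with rfl | hx
  · simp
  have hy0 : 0 < y := hx.trans_le hxy
  have hslope := strictConcaveOn_sin_Icc.concaveOn.antitoneOn_slope_gt (x := 0)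
    ⟨le_rfl, pi_pos.le⟩ ⟨⟨hx.le, hxy.trans hy⟩, hx⟩ ⟨⟨hy0.le, hy⟩, hy0⟩ hxy
  simp only [slope_def_field, sub_zero, sin_zero] at hslope
  rwa [div_le_div_iff₀ hy0 hx, mul_comm, mul_comm (sin x)] at hslope

noncomputable def cosRpowSinDivSin (p t : ℝ) : ℝ :=
  cos t ^ (p - 1) * sin t / sin (p * t)

lemma hasDerivAt_cosRpowSinDivSin {p t : ℝ} (hcos : 0 < cos t) (hsin : sin (p * t) ≠ 0) :
    HasDerivAt (cosRpowSinDivSin p)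
      (cos t ^ (p - 2) * ((2 - p) * sin (p * t) - p * sin ((2 - p) * t))
        / (2 * sin (p * t) ^ 2)) t := by
  have hpow : HasDerivAt (fun u => cos u ^ (p - 1))
      (-sin t * (p - 1) * cos t ^ (p - 1 - 1)) t :=
    (Real.hasDerivAt_cos t).rpow_const (Or.inl hcos.ne')
  have hden : HasDerivAt (fun u => sin (p * u)) (cos (p * t) * p) t := by
    simpa using ((hasDerivAt_id' t).const_mul p).sin
  refine ((hpow.mul (Real.hasDerivAt_sin t)).div hden hsin).congr_deriv ?_
  have hsplit : cos t ^ (p - 1) = cos t ^ (p - 2) * cos t := by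
    rw [← Real.rpow_add_one hcos.ne']; ring_nf
  simp only [Pi.mul_apply]
  rw [hsplit, show p - 1 - 1 = p - 2 by ring, show (2 - p) * t = 2 * t - p * t by ring,
    sin_sub, sin_two_mul, cos_two_mul]
  field_simp
  linear_combination (-2 * (p - 1) * sin (p * t)) * sin_sq_add_cos_sq t

lemma antitoneOn_cosRpowSinDivSin {p : ℝ} (hp1 : 1 ≤ p) (hp2 : p ≤ 2) :
    AntitoneOn (cosRpowSinDivSin p) (Ioo 0 (π / 2)) := by
  have hderiv : ∀ t ∈ Ioo 0 (π / 2), HasDerivAt (cosRpowSinDivSin p)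
      (cos t ^ (p - 2) * ((2 - p) * sin (p * t) - p * sin ((2 - p) * t))
        / (2 * sin (p * t) ^ 2)) t := fun t ⟨ht0, ht2⟩ =>
    hasDerivAt_cosRpowSinDivSin (cos_pos_of_mem_Ioo ⟨by linarith [pi_pos], ht2⟩)
      (sin_pos_of_pos_of_lt_pi (by positivity) (by nlinarith [pi_pos])).ne'
  refine antitoneOn_of_hasDerivWithinAt_nonpos (convex_Ioo _ _)
    (fun t ht => (hderiv t ht).continuousAt.continuousWithinAt)
    (fun t ht => (hderiv t (interior_subset ht)).hasDerivWithinAt) ?_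
  rw [interior_Ioo]
  rintro t ⟨ht0, ht2⟩
  have hcos : 0 < cos t := cos_pos_of_mem_Ioo ⟨by linarith [pi_pos], ht2⟩
  have hchord := mul_sin_le_mul_sin (x := (2 - p) * t) (y := p * t) (by nlinarith) (by nlinarith)
    (by nlinarith [pi_pos])
  have hnum : (2 - p) * sin (p * t) - p * sin ((2 - p) * t) ≤ 0 := by
    nlinarith
  exact div_nonpos_of_nonpos_of_nonneg
    (mul_nonpos_of_nonneg_of_nonpos (Real.rpow_nonneg hcos.le _) hnum) (by positivity)

lemma cos_rpow_add_le_cos_rpow {p ψ : ℝ} (hp1 : 1 < p) (hp2 : p ≤ 2) (hψ : ψ ∈ Icc 0 (π / 2)) :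
    cos (π / (2 * p)) ^ p
        + cos (π / (2 * p)) ^ (p - 1) * sin (π / (2 * p)) * cos (p * ψ)
      ≤ cos ψ ^ p := by
  set α := π / (2 * p)
  have hpα : p * α = π / 2 := by simp only [α]; field_simp
  have hα : α ∈ Ioo 0 (π / 2) := pi_div_two_mul_mem_Ioo hp1
  set G : ℝ → ℝ := fun t => cos t ^ p - cos α ^ (p - 1) * sin α * cos (p * t)
  set G' : ℝ → ℝ := fun t => p * sin (p * t) * (cosRpowSinDivSin p α - cosRpowSinDivSin p t)
  have hG' : ∀ t ∈ Ioo 0 (π / 2), HasDerivAt G (G' t) t := by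
    rintro t ⟨ht0, ht2⟩
    have hcos : 0 < cos t := cos_pos_of_mem_Ioo ⟨by linarith [pi_pos], ht2⟩
    have hsin : 0 < sin (p * t) :=
      sin_pos_of_pos_of_lt_pi (by positivity) (by nlinarith [pi_pos])
    have hpow : HasDerivAt (fun u => cos u ^ p) (-sin t * p * cos t ^ (p - 1)) t :=
      (Real.hasDerivAt_cos t).rpow_const (Or.inl hcos.ne')
    refine (hpow.sub ((((hasDerivAt_id' t).const_mul p).cos).const_mul
      (cos α ^ (p - 1) * sin α))).congr_deriv ?_
    simp only [G', cosRpowSinDivSin, hpα, sin_pi_div_two, div_one]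
    field_simp
    ring
  have hcont : Continuous G := by fun_prop (disch := positivity)
  have hGα : G α = cos α ^ p := by simp [G, hpα]
  have hsin_pos : ∀ t ∈ Ioo 0 (π / 2), 0 < p * sin (p * t) := fun t ht =>
    mul_pos (by linarith) (sin_pos_of_pos_of_lt_pi (by nlinarith [ht.1])
      (by nlinarith [pi_pos, ht.2]))
  have hle : G α ≤ G ψ := by
    rcases le_total ψ α with hψα | hαψ
    · refine antitoneOn_of_hasDerivWithinAt_nonpos (f' := G') (convex_Icc 0 α)
        hcont.continuousOn (fun t ht => ?_) (fun t ht => ?_) ⟨hψ.1, hψα⟩ ⟨hα.1.le, le_rfl⟩ hψα <;>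
        rw [interior_Icc] at ht <;> have ht' : t ∈ Ioo 0 (π / 2) := ⟨ht.1, ht.2.trans hα.2⟩
      · exact (hG' t ht').hasDerivWithinAt
      · exact mul_nonpos_of_nonneg_of_nonpos (hsin_pos t ht').le (sub_nonpos.2
          (antitoneOn_cosRpowSinDivSin hp1.le hp2 ht' hα ht.2.le))
    · refine monotoneOn_of_hasDerivWithinAt_nonneg (f' := G') (convex_Icc α (π / 2))
        hcont.continuousOn (fun t ht => ?_) (fun t ht => ?_) ⟨le_rfl, hα.2.le⟩ ⟨hαψ, hψ.2⟩ hαψ <;>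
        rw [interior_Icc] at ht <;> have ht' : t ∈ Ioo 0 (π / 2) := ⟨hα.1.trans ht.1, ht.2⟩
      · exact (hG' t ht').hasDerivWithinAt
      · exact mul_nonneg (hsin_pos t ht').le (sub_nonneg.2
          (antitoneOn_cosRpowSinDivSin hp1.le hp2 hα ht' ht.1.le))
  simp only [hGα, G] at hle
  linarith

lemma cos_le_two_rpow {a : ℝ} (h1 : π / 4 ≤ a) (h2 : a ≤ π / 2) :
    cos a ≤ (2 : ℝ) ^ (-(2 * a / π)) := by
  set W : ℝ → ℝ := fun u => (2 : ℝ) ^ (-(2 * u / π)) - cos u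
  have hW' : ∀ u,
      HasDerivAt W (Real.log 2 * (-(2 / π)) * (2 : ℝ) ^ (-(2 * u / π)) + sin u) u := by
    intro u
    have hlin : HasDerivAt (fun u : ℝ => -(2 * u / π)) (-(2 / π)) u :=
      (((hasDerivAt_id' u).const_mul 2).div_const π).neg.congr_deriv (by ring)
    exact ((hlin.const_rpow two_pos).sub (hasDerivAt_cos u)).congr_deriv (by ring)
  have hmono : MonotoneOn W (Icc (π / 4) (π / 2)) := by
    refine monotoneOn_of_hasDerivWithinAt_nonneg (convex_Icc _ _)
      (fun u _ => (hW' u).continuousAt.continuousWithinAt) (fun u _ => (hW' u).hasDerivWithinAt) ?_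
    rw [interior_Icc]
    rintro u ⟨hu1, hu2⟩
    have hsin : √2 / 2 ≤ sin u := by
      rw [← sin_pi_div_four]
      exact sin_le_sin_of_le_of_le_pi_div_two (by linarith [pi_pos]) hu2.le hu1.le
    have hpow : (2 : ℝ) ^ (-(2 * u / π)) ≤ 1 :=
      rpow_le_one_of_one_le_of_nonpos one_le_two
        (neg_nonpos.2 (div_nonneg (by linarith [pi_pos]) pi_pos.le))
    have hlog : Real.log 2 ≤ 1 := by linarith [log_le_sub_one_of_pos two_pos]
    have hpi : 2 / π ≤ 2 / 3 :=
      div_le_div_of_nonneg_left (by norm_num) (by norm_num) pi_gt_three.le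
    have hsqrt : 4 / 3 < √2 := by
      rw [lt_sqrt (by norm_num)]; norm_num
    have hprod : Real.log 2 * (2 / π) * (2 : ℝ) ^ (-(2 * u / π)) ≤ 1 * (2 / 3) * 1 := by
      gcongr
    linarith
  have hW0 : W (π / 4) = 0 := by
    have hexp : -(2 * (π / 4) / π) = -(1 / 2) := by field_simp; ring
    simp only [W]
    rw [hexp, rpow_neg two_pos.le, ← sqrt_eq_rpow, cos_pi_div_four]
    field_simp
    simp
  have := hmono ⟨le_rfl, by linarith [pi_pos]⟩ ⟨h1, h2⟩ h1
  simp only [hW0, W] at this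
  linarith

lemma cos_pi_div_two_mul_rpow_le_half {p : ℝ} (hp1 : 1 ≤ p) (hp2 : p ≤ 2) :
    cos (π / (2 * p)) ^ p ≤ 1 / 2 := by
  have hp0 : 0 < p := by linarith
  have hα4 : π / 4 ≤ π / (2 * p) :=
    div_le_div_of_nonneg_left pi_pos.le (by positivity) (by linarith)
  have hα2 : π / (2 * p) ≤ π / 2 := div_le_div_of_nonneg_left pi_pos.le two_pos (by linarith)
  calc cos (π / (2 * p)) ^ p ≤ ((2 : ℝ) ^ (-(2 * (π / (2 * p)) / π))) ^ p :=
        rpow_le_rpow (cos_nonneg_of_mem_Icc ⟨by linarith [pi_pos], hα2⟩) (cos_le_two_rpow hα4 hα2)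
          hp0.le
    _ = 1 / 2 := by
        rw [← rpow_mul two_pos.le]
        have : -(2 * (π / (2 * p)) / π) * p = -1 := by field_simp
        rw [this, rpow_neg_one, one_div]

lemma monotoneOn_mul_add_rpow_sub_rpow {q A y : ℝ} (hq0 : 0 < q) (hq1 : q ≤ 1)
    (hA : 1 ≤ A * 2 ^ (q - 1)) :
    MonotoneOn (fun σ => A * (σ + y) ^ q - σ ^ q) (Ici |y|) := by
  have hA0 : 0 ≤ A :=
    (pos_of_mul_pos_left (one_pos.trans_le hA) (rpow_pos_of_pos two_pos _).le).le
  have hpos : ∀ σ ∈ Ioi |y|, 0 < σ + y ∧ 0 < σ := fun σ hσ =>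
    ⟨by linarith [neg_abs_le y, mem_Ioi.1 hσ], (abs_nonneg y).trans_lt hσ⟩
  have hderiv : ∀ σ ∈ Ioi |y|, HasDerivAt (fun σ => A * (σ + y) ^ q - σ ^ q)
      (A * (q * (σ + y) ^ (q - 1)) - q * σ ^ (q - 1)) σ := fun σ hσ =>
    ((((hasDerivAt_id' σ).add_const y).rpow_const (Or.inl (hpos σ hσ).1.ne')).const_mul A).sub
      (hasDerivAt_rpow_const (Or.inl (hpos σ hσ).2.ne')) |>.congr_deriv (by ring)
  refine monotoneOn_of_hasDerivWithinAt_nonneg (convex_Ici _)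
    (Continuous.continuousOn (by fun_prop (disch := positivity)))
    (fun σ hσ => (hderiv σ (by rwa [interior_Ici] at hσ)).hasDerivWithinAt) ?_
  rw [interior_Ici]
  intro σ hσ
  obtain ⟨hσy, hσ0⟩ := hpos σ hσ
  have hpow : σ ^ (q - 1) ≤ A * (σ + y) ^ (q - 1) :=
    calc σ ^ (q - 1) ≤ A * 2 ^ (q - 1) * σ ^ (q - 1) :=
          le_mul_of_one_le_left (rpow_nonneg hσ0.le _) hA
      _ = A * (2 * σ) ^ (q - 1) := by rw [mul_rpow two_pos.le hσ0.le, mul_assoc]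
      _ ≤ A * (σ + y) ^ (q - 1) := mul_le_mul_of_nonneg_left
          (rpow_le_rpow_of_nonpos hσy (by linarith [le_abs_self y, mem_Ioi.1 hσ]) (by linarith)) hA0
  nlinarith

lemma sq_rpow_div_two {x : ℝ} (hx : 0 ≤ x) (p : ℝ) : (x ^ 2) ^ (p / 2) = x ^ p := by
  rw [rpow_div_two_eq_sqrt _ (sq_nonneg x), sqrt_sq hx]

lemma one_add_cos_two_mul_rpow_neg {θ : ℝ} (hθ : 0 ≤ cos θ) (p : ℝ) :
    (1 + cos (2 * θ)) ^ (-(p / 2)) = 2 ^ (-(p / 2)) * (cos θ ^ p)⁻¹ := by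
  rw [cos_two_mul, show 1 + (2 * cos θ ^ 2 - 1) = 2 * cos θ ^ 2 by ring,
    mul_rpow two_pos.le (sq_nonneg _), rpow_neg (sq_nonneg _), sq_rpow_div_two hθ]

lemma rpow_le_of_polar {p r φ s : ℝ} (hp1 : 1 < p) (hp2 : p ≤ 2) (hr : 0 ≤ r) (hφ : |φ| ≤ π)
    (hs : 2 * r ≤ s) :
    s ^ (p / 2) ≤ (1 + cos (π / p)) ^ (-(p / 2)) * (s + 2 * (r * cos φ)) ^ (p / 2)
      - 2 ^ (p / 2) * tan (π / (2 * p)) * (r ^ (p / 2) * cos (φ * (p / 2))) := by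
  set α := π / (2 * p)
  set A := (1 + cos (π / p)) ^ (-(p / 2))
  set ψ := |φ| / 2
  have hα : α ∈ Ioo 0 (π / 2) := pi_div_two_mul_mem_Ioo hp1
  have hc : 0 < cos α := cos_pos_of_mem_Ioo ⟨by linarith [hα.1, pi_pos], hα.2⟩
  have hcp : 0 < cos α ^ p := rpow_pos_of_pos hc p
  have hA : A = 2 ^ (-(p / 2)) * (cos α ^ p)⁻¹ := by
    rw [← one_add_cos_two_mul_rpow_neg hc.le, show 2 * α = π / p by simp only [α]; field_simp]
  have hψ : ψ ∈ Icc 0 (π / 2) := ⟨by positivity, by simp only [ψ]; linarith⟩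
  have hcosψ : 0 ≤ cos ψ := cos_nonneg_of_mem_Icc ⟨by linarith [hψ.1, pi_pos], hψ.2⟩
  have hcos_half : cos φ = 2 * cos ψ ^ 2 - 1 := by
    rw [← cos_two_mul, show 2 * ψ = |φ| by ring, cos_abs]
  have hcos_mul : cos (φ * (p / 2)) = cos (p * ψ) := by
    rw [← cos_abs, abs_mul, abs_of_pos (by linarith : 0 < p / 2)]
    simp only [ψ]; ring_nf
  have hmono : A * (2 * r + 2 * (r * cos φ)) ^ (p / 2) - (2 * r) ^ (p / 2)
      ≤ A * (s + 2 * (r * cos φ)) ^ (p / 2) - s ^ (p / 2) := by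
    have hA2 : 1 ≤ A * 2 ^ (p / 2 - 1) := by
      rw [hA, mul_comm (2 ^ _), mul_assoc, ← rpow_add two_pos,
        show -(p / 2) + (p / 2 - 1) = -1 by ring, rpow_neg_one, ← mul_inv,
        one_le_inv₀ (by positivity)]
      linarith [cos_pi_div_two_mul_rpow_le_half hp1.le hp2]
    have hy : |2 * (r * cos φ)| ≤ 2 * r := by
      rw [abs_mul, abs_mul, abs_of_pos two_pos, abs_of_nonneg hr]
      nlinarith [abs_cos_le_one φ]
    exact monotoneOn_mul_add_rpow_sub_rpow (by linarith) (by linarith) hA2 hy (hy.trans hs) hs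
  have hboundary : A * (2 * r + 2 * (r * cos φ)) ^ (p / 2)
      = (2 * r) ^ (p / 2) * (cos ψ ^ p / cos α ^ p) := by
    rw [hcos_half, show 2 * r + 2 * (r * (2 * cos ψ ^ 2 - 1)) = 2 * r * (2 * cos ψ ^ 2) by ring,
      mul_rpow (by positivity) (by positivity), mul_rpow two_pos.le (sq_nonneg _),
      sq_rpow_div_two hcosψ, hA, rpow_neg two_pos.le]
    field_simp
  have hcos_rpow : tan α * cos (p * ψ) ≤ cos ψ ^ p / cos α ^ p - 1 := by
    have := cos_rpow_add_le_cos_rpow hp1 hp2 hψ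
    rw [le_sub_iff_add_le, le_div_iff₀ hcp, tan_eq_sin_div_cos]
    rw [rpow_sub_one hc.ne'] at this
    field_simp at this ⊢
    linarith
  have hgain := mul_le_mul_of_nonneg_left hcos_rpow
    (by positivity : (0 : ℝ) ≤ 2 ^ (p / 2) * r ^ (p / 2))
  rw [hboundary, mul_rpow two_pos.le hr] at hmono
  rw [hcos_mul]
  linarith

theorem stmt_12 (p : ℝ) (hp1 : 1 < p) (hp2 : p ≤ 2) (z w : ℂ) :
    (‖w‖ ^ 2 + ‖z‖ ^ 2) ^ (p / 2)
      ≤ (1 + Real.cos (π / p)) ^ (-(p / 2)) * ‖w + (starRingEnd ℂ) z‖ ^ p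
        - (2 : ℝ) ^ (p / 2) * Real.tan (π / (2 * p)) * ((w * z) ^ ((p : ℂ) / 2)).re := by
  have hre : ((w * z) ^ ((p : ℂ) / 2)).re
      = ‖w * z‖ ^ (p / 2) * cos (Complex.arg (w * z) * (p / 2)) := by
    rw [show (p : ℂ) / 2 = ((p / 2 : ℝ) : ℂ) by push_cast; ring]
    exact Complex.cpow_ofReal_re _ _
  have hnorm : ‖w + (starRingEnd ℂ) z‖ ^ p
      = (‖w‖ ^ 2 + ‖z‖ ^ 2 + 2 * (‖w * z‖ * cos (Complex.arg (w * z)))) ^ (p / 2) := by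
    rw [← sq_rpow_div_two (norm_nonneg _), Complex.sq_norm, Complex.normSq_add,
      Complex.normSq_conj, Complex.conj_conj, Complex.norm_mul_cos_arg, Complex.sq_norm,
      Complex.sq_norm]
  have hs : 2 * ‖w * z‖ ≤ ‖w‖ ^ 2 + ‖z‖ ^ 2 := by
    rw [norm_mul, ← mul_assoc]
    exact two_mul_le_add_sq _ _
  rw [hre, hnorm]
  exact rpow_le_of_polar hp1 hp2 (norm_nonneg _) (Complex.abs_arg_le_pi _) hs
end

section
/- For every real p > 1, one has (p − 1) · tan(π/(2p)) ≤ 1 if and only if 1 < p ≤ 2. -/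
open Real Set Filter Topology

noncomputable def Fz (s : ℝ) : ℝ := π / 2 * (s / (1 + s)) - Real.arctan s

lemma hasDerivFz {s : ℝ} (hs : -1 < s) :
    HasDerivAt Fz (π / 2 / (1 + s) ^ 2 - 1 / (1 + s ^ 2)) s := by
  have h1 : (1 : ℝ) + s ≠ 0 := by linarith
  have hd : HasDerivAt (fun t : ℝ => t / (1 + t)) (1 / (1 + s) ^ 2) s := by
    have := (hasDerivAt_id s).div ((hasDerivAt_id s).const_add 1) h1
    refine this.congr_deriv ?_
    simp only [id_eq]
    field_simp
    ring
  have := (hd.const_mul (π / 2)).sub (Real.hasDerivAt_arctan s)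
  refine this.congr_deriv ?_
  ring

lemma contFz : ContinuousOn Fz (Set.Ici (0 : ℝ)) := by
  apply ContinuousOn.sub
  · apply ContinuousOn.mul continuousOn_const
    apply ContinuousOn.div continuousOn_id (by fun_prop)
    intro x hx
    simp only [Set.mem_Ici] at hx
    positivity
  · exact Real.continuous_arctan.continuousOn

lemma key (s : ℝ) (hs : 0 < s) : Real.arctan s ≤ π / 2 * (s / (1 + s)) ↔ s ≤ 1 := by
  have hpi4 : π < 4 := by linarith [Real.pi_lt_d2]
  have hpi2 : 2 < π := by linarith [Real.pi_gt_three]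
  obtain ⟨c, hc_def⟩ : ∃ c : ℝ, c = π / 2 - 1 := ⟨_, rfl⟩
  have hc0 : 0 < c := by rw [hc_def]; linarith
  have hc1 : c < 1 := by rw [hc_def]; linarith
  obtain ⟨d, hd_def⟩ : ∃ d : ℝ, d = Real.sqrt (1 - c ^ 2) := ⟨_, rfl⟩
  have hd2 : d ^ 2 = 1 - c ^ 2 := by rw [hd_def]; exact Real.sq_sqrt (by nlinarith)
  have hd0 : 0 < d := by rw [hd_def]; exact Real.sqrt_pos.mpr (by nlinarith)
  have hd1 : d < 1 := by nlinarith [hd2, hd0]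
  obtain ⟨a, ha_def⟩ : ∃ a : ℝ, a = (1 - d) / c := ⟨_, rfl⟩
  obtain ⟨b, hb_def⟩ : ∃ b : ℝ, b = (1 + d) / c := ⟨_, rfl⟩
  have ha0 : 0 < a := by rw [ha_def]; exact div_pos (by linarith) hc0
  have hab : a * b = 1 := by
    rw [ha_def, hb_def]
    field_simp
    nlinarith [hd2]
  have haltb : a < b := by
    rw [ha_def, hb_def, div_lt_div_iff₀ hc0 hc0]
    nlinarith
  have ha1 : a < 1 := by nlinarith
  have hb1 : 1 < b := by nlinarith
  have hsum : c * (a + b) = 2 := by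
    rw [ha_def, hb_def]
    field_simp
    ring
  have hfac : ∀ t : ℝ, c * t ^ 2 - 2 * t + c = c * (t - a) * (t - b) := by
    intro t
    linear_combination t * hsum - c * hab
  have hderiv : ∀ t : ℝ, 0 ≤ t →
      deriv Fz t = c * (t - a) * (t - b) / ((1 + t) ^ 2 * (1 + t ^ 2)) := by
    intro t ht
    rw [(hasDerivFz (by linarith : (-1:ℝ) < t)).deriv, ← hfac t, hc_def]
    have h1 : (1 : ℝ) + t ≠ 0 := by linarith
    have h2 : (1 : ℝ) + t ^ 2 ≠ 0 := by positivity
    field_simp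
    ring
  have hden : ∀ t : ℝ, 0 ≤ t → 0 < (1 + t) ^ 2 * (1 + t ^ 2) := by
    intro t ht
    exact mul_pos (pow_pos (by linarith) 2) (by positivity)
  -- monotonicity pieces
  have mono1 : MonotoneOn Fz (Icc 0 a) := by
    apply monotoneOn_of_deriv_nonneg (convex_Icc _ _)
      (contFz.mono Icc_subset_Ici_self)
    · intro t ht
      rw [interior_Icc] at ht
      exact (hasDerivFz (by linarith [ht.1])).differentiableAt.differentiableWithinAt
    · intro t ht
      rw [interior_Icc] at ht
      rw [hderiv t ht.1.le]
      apply div_nonneg _ (hden t ht.1.le).le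
      have h1 : t - a < 0 := by linarith [ht.2]
      have h2 : t - b < 0 := by linarith [ht.2]
      nlinarith [mul_pos hc0 (mul_pos_of_neg_of_neg h1 h2)]
  have anti1 : AntitoneOn Fz (Icc a 1) := by
    apply antitoneOn_of_deriv_nonpos (convex_Icc _ _)
      (contFz.mono fun x hx => le_trans ha0.le hx.1)
    · intro t ht
      rw [interior_Icc] at ht
      exact (hasDerivFz (by linarith [ht.1])).differentiableAt.differentiableWithinAt
    · intro t ht
      rw [interior_Icc] at ht
      rw [hderiv t (by linarith [ht.1])]
      apply div_nonpos_of_nonpos_of_nonneg _ (hden t (by linarith [ht.1])).le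
      have h1 : 0 < t - a := by linarith [ht.1]
      have h2 : t - b < 0 := by linarith [ht.2]
      exact (mul_neg_of_pos_of_neg (mul_pos hc0 h1) h2).le
  have anti2 : StrictAntiOn Fz (Icc 1 b) := by
    apply strictAntiOn_of_deriv_neg (convex_Icc _ _)
      (contFz.mono fun x hx => le_trans zero_le_one hx.1)
    intro t ht
    rw [interior_Icc] at ht
    rw [hderiv t (by linarith [ht.1])]
    apply div_neg_of_neg_of_pos _ (hden t (by linarith [ht.1]))
    have h1 : 0 < t - a := by linarith [ht.1]
    have h2 : t - b < 0 := by linarith [ht.2]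
    exact mul_neg_of_pos_of_neg (mul_pos hc0 h1) h2
  have mono3 : StrictMonoOn Fz (Ici b) := by
    apply strictMonoOn_of_deriv_pos (convex_Ici _)
      (contFz.mono (Ici_subset_Ici.mpr (by linarith)))
    intro t ht
    rw [interior_Ici, mem_Ioi] at ht
    rw [hderiv t (by linarith)]
    apply div_pos _ (hden t (by linarith))
    have h1 : 0 < t - a := by linarith
    have h2 : 0 < t - b := by linarith
    exact mul_pos (mul_pos hc0 h1) h2
  have hF0 : Fz 0 = 0 := by simp [Fz]
  have hF1 : Fz 1 = 0 := by
    simp only [Fz, Real.arctan_one]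
    ring
  have hlim : Tendsto Fz atTop (𝓝 0) := by
    have h1 : Tendsto (fun s : ℝ => s / (1 + s)) atTop (𝓝 1) := by
      have heq : (fun s : ℝ => s / (1 + s)) =ᶠ[atTop] fun s => 1 - (1 + s)⁻¹ := by
        filter_upwards [eventually_gt_atTop (0 : ℝ)] with s hs
        have : (1 : ℝ) + s ≠ 0 := by linarith
        field_simp
        ring
      rw [tendsto_congr' heq]
      have h0 : Tendsto (fun s : ℝ => (1 + s)⁻¹) atTop (𝓝 0) :=
        tendsto_inv_atTop_zero.comp (tendsto_atTop_add_const_left _ 1 tendsto_id)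
      simpa using tendsto_const_nhds.sub h0
    have h2 : Tendsto Real.arctan atTop (𝓝 (π / 2)) :=
      Real.tendsto_arctan_atTop.mono_right nhdsWithin_le_nhds
    have := (h1.const_mul (π / 2)).sub h2
    exact (by simpa [Fz, mul_one] using this :
      Tendsto (fun x => π / 2 * (x / (1 + x)) - arctan x) atTop (𝓝 0))
  have hA : ∀ t ∈ Icc (0 : ℝ) 1, 0 ≤ Fz t := by
    intro t ht
    rcases le_total t a with h | h
    · have := mono1 (left_mem_Icc.mpr ha0.le) ⟨ht.1, h⟩ ht.1
      rwa [hF0] at this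
    · have := anti1 ⟨h, ht.2⟩ (right_mem_Icc.mpr ha1.le) ht.2
      rwa [hF1] at this
  have hle : ∀ t, b ≤ t → Fz t ≤ 0 := by
    intro t ht
    apply ge_of_tendsto hlim
    filter_upwards [eventually_ge_atTop t] with u hu
    exact mono3.monotoneOn (mem_Ici.mpr ht) (mem_Ici.mpr (le_trans ht hu)) hu
  have hB : ∀ t, 1 < t → Fz t < 0 := by
    intro t ht
    rcases le_total t b with h | h
    · have := anti2 (left_mem_Icc.mpr hb1.le) ⟨ht.le, h⟩ ht
      rwa [hF1] at this
    · have h1 : Fz t < Fz (t + 1) :=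
        mono3 (mem_Ici.mpr h) (mem_Ici.mpr (by linarith)) (by linarith)
      have h2 : Fz (t + 1) ≤ 0 := hle (t + 1) (by linarith)
      linarith
  constructor
  · intro h
    by_contra h2
    push_neg at h2
    have := hB s h2
    simp only [Fz] at this
    linarith
  · intro h
    have := hA s ⟨hs.le, h⟩
    simp only [Fz] at this
    linarith

theorem stmt_17 (p : ℝ) (hp : 1 < p) :
    (p - 1) * Real.tan (π / (2 * p)) ≤ 1 ↔ p ≤ 2 := by
  have hp0 : 0 < p := by linarith
  have hs : 0 < p - 1 := by linarith
  have hθ1 : 0 < π / (2 * p) := by positivity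
  have hθ2 : π / (2 * p) < π / 2 := by
    rw [div_lt_div_iff₀ (by positivity) (by norm_num)]
    nlinarith [Real.pi_pos]
  have step1 : (p - 1) * Real.tan (π / (2 * p)) ≤ 1 ↔
      Real.tan (π / (2 * p)) ≤ (p - 1)⁻¹ := by
    rw [mul_comm, ← le_div_iff₀ hs, one_div]
  have step2 : Real.tan (π / (2 * p)) ≤ (p - 1)⁻¹ ↔
      π / (2 * p) ≤ Real.arctan (p - 1)⁻¹ := by
    constructor
    · intro h
      have := Real.arctan_strictMono.monotone h
      rwa [Real.arctan_tan (by linarith) hθ2] at this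
    · intro h
      have := Real.strictMonoOn_tan.monotoneOn
        ⟨by linarith, hθ2⟩
        ⟨Real.neg_pi_div_two_lt_arctan _, Real.arctan_lt_pi_div_two _⟩ h
      rwa [Real.tan_arctan] at this
  have hval : π / 2 - π / (2 * p) = π / 2 * ((p - 1) / (1 + (p - 1))) := by
    have hp' : p ≠ 0 := hp0.ne'
    field_simp
    ring
  rw [step1, step2, Real.arctan_inv_of_pos hs]
  constructor
  · intro h
    have h2 : Real.arctan (p - 1) ≤ π / 2 * ((p - 1) / (1 + (p - 1))) := by
      rw [← hval]; linarith
    have := (key (p - 1) hs).mp h2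
    linarith
  · intro h
    have h2 := (key (p - 1) hs).mpr (by linarith : p - 1 ≤ 1)
    rw [← hval] at h2
    linarith
end
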